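/- Let F : ℝ → ℝ be C¹ with F(0) = 0 and |F'(t)| ≤ a(|t| + |t|^{q−1}) for some a > 0 and q > 2. Then for every ε > 0 there exists C_ε > 0 such that for all s, t ∈ ℝ: |F(s + t) − F(s)| ≤ ε(|s|² + |s|^q) + C_ε(|t|² + |t|^q). -/

import Mathlib

/-!
By the mean value theorem, with `m = |s| + |t|`, the increment is at most `a (m + m^(q-1)) |t|`.
If `|t| ≤ δ |s|` then `m ≤ 2 |s|` and this is `≤ a δ 2^(q-1) (|s|² + |s|^q)`, which is `≤ ε (…)` for
`δ` small. Otherwise `m ≤ (1 + δ⁻¹) |t|` and it is `≤ a (1 + δ⁻¹)^(q-1) (|t|² + |t|^q)`.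
-/

open Real

lemma abs_sub_le_of_abs_deriv_le {F : ℝ → ℝ} (hF : Differentiable ℝ F) {a p : ℝ} (ha : 0 ≤ a)
    (hp : 0 ≤ p) (hF' : ∀ x, |deriv F x| ≤ a * (|x| + |x| ^ p)) (s t : ℝ) :
    |F (s + t) - F s| ≤ a * ((|s| + |t|) + (|s| + |t|) ^ p) * |t| := by
  have hbound : ∀ x ∈ Set.uIcc s (s + t),
      ‖deriv F x‖ ≤ a * ((|s| + |t|) + (|s| + |t|) ^ p) := by
    intro x hx
    have hx : |x| ≤ |s| + |t| := by
      have hend : max |s| |s + t| ≤ |s| + |t| :=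
        max_le (le_add_of_nonneg_right (abs_nonneg t)) (abs_add_le s t)
      rcases Set.mem_uIcc.mp hx with ⟨h₁, h₂⟩ | ⟨h₁, h₂⟩
      · exact (abs_le_max_abs_abs h₁ h₂).trans hend
      · exact (abs_le_max_abs_abs h₁ h₂).trans ((max_comm _ _).le.trans hend)
    calc ‖deriv F x‖ ≤ a * (|x| + |x| ^ p) := hF' x
      _ ≤ a * ((|s| + |t|) + (|s| + |t|) ^ p) := by gcongr
  simpa using Convex.norm_image_sub_le_of_norm_deriv_le (fun x _ => hF x) hbound
    (convex_uIcc s (s + t)) Set.left_mem_uIcc Set.right_mem_uIcc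

section PowerBounds

variable {q : ℝ}

lemma add_rpow_sub_one_le_of_le_mul (hq : 2 ≤ q) {c m r : ℝ} (hc : 1 ≤ c) (hm : 0 ≤ m)
    (hmr : m ≤ c * r) : m + m ^ (q - 1) ≤ c ^ (q - 1) * (r + r ^ (q - 1)) := by
  have hr : 0 ≤ r := nonneg_of_mul_nonneg_right (hm.trans hmr) (by linarith)
  have hcc : c ≤ c ^ (q - 1) := self_le_rpow_of_one_le hc (by linarith)
  calc m + m ^ (q - 1) ≤ c * r + (c * r) ^ (q - 1) := by gcongr; linarith
    _ = c * r + c ^ (q - 1) * r ^ (q - 1) := by rw [mul_rpow (by linarith) hr]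
    _ ≤ c ^ (q - 1) * (r + r ^ (q - 1)) := by nlinarith

lemma mul_add_rpow_sub_one (hq : 2 ≤ q) {r : ℝ} (hr : 0 ≤ r) :
    r * (r + r ^ (q - 1)) = r ^ (2 : ℝ) + r ^ q := by
  have hrq : r ^ q = r ^ (q - 1) * r := by
    rw [← rpow_add_one' hr (by linarith), sub_add_cancel]
  rw [rpow_two, hrq]
  ring

lemma increment_bound_le_of_abs_le (hq : 2 ≤ q) {a δ s t : ℝ} (ha : 0 ≤ a) (hδ1 : δ ≤ 1)
    (ht : |t| ≤ δ * |s|) :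
    a * ((|s| + |t|) + (|s| + |t|) ^ (q - 1)) * |t| ≤
      a * δ * 2 ^ (q - 1) * (|s| ^ (2 : ℝ) + |s| ^ q) := by
  have hm : |s| + |t| ≤ 2 * |s| := by linarith [mul_le_of_le_one_left (abs_nonneg s) hδ1]
  have := add_rpow_sub_one_le_of_le_mul hq one_le_two (by positivity) hm
  calc a * ((|s| + |t|) + (|s| + |t|) ^ (q - 1)) * |t|
      ≤ a * (2 ^ (q - 1) * (|s| + |s| ^ (q - 1))) * (δ * |s|) := by gcongr
    _ = a * δ * 2 ^ (q - 1) * (|s| * (|s| + |s| ^ (q - 1))) := by ring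
    _ = a * δ * 2 ^ (q - 1) * (|s| ^ (2 : ℝ) + |s| ^ q) := by
      rw [mul_add_rpow_sub_one hq (abs_nonneg s)]

lemma increment_bound_le_of_le_abs (hq : 2 ≤ q) {a δ s t : ℝ} (ha : 0 ≤ a) (hδ0 : 0 < δ)
    (ht : δ * |s| ≤ |t|) :
    a * ((|s| + |t|) + (|s| + |t|) ^ (q - 1)) * |t| ≤
      a * (1 + δ⁻¹) ^ (q - 1) * (|t| ^ (2 : ℝ) + |t| ^ q) := by
  have hm : |s| + |t| ≤ (1 + δ⁻¹) * |t| := by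
    have : |s| ≤ δ⁻¹ * |t| := by rw [inv_mul_eq_div, le_div_iff₀ hδ0]; linarith
    linarith
  have := add_rpow_sub_one_le_of_le_mul hq (by simp [hδ0.le]) (by positivity) hm
  calc a * ((|s| + |t|) + (|s| + |t|) ^ (q - 1)) * |t|
      ≤ a * ((1 + δ⁻¹) ^ (q - 1) * (|t| + |t| ^ (q - 1))) * |t| := by gcongr
    _ = a * (1 + δ⁻¹) ^ (q - 1) * (|t| * (|t| + |t| ^ (q - 1))) := by ring
    _ = a * (1 + δ⁻¹) ^ (q - 1) * (|t| ^ (2 : ℝ) + |t| ^ q) := by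
      rw [mul_add_rpow_sub_one hq (abs_nonneg t)]

end PowerBounds

theorem stmt_11_general (a q : ℝ) (ha : 0 < a) (hq : 2 < q)
    (F : ℝ → ℝ) (hF : ContDiff ℝ 1 F)
    (hF' : ∀ t : ℝ, |deriv F t| ≤ a * (|t| + |t| ^ (q - 1))) :
    ∀ ε : ℝ, 0 < ε → ∃ C : ℝ, 0 < C ∧
      ∀ s t : ℝ, |F (s + t) - F s| ≤
        ε * (|s| ^ (2:ℝ) + |s| ^ q) + C * (|t| ^ (2:ℝ) + |t| ^ q) := by
  intro ε hε
  set δ := min 1 (ε / (a * 2 ^ (q - 1)))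
  have hδ0 : 0 < δ := lt_min one_pos (by positivity)
  have hδ1 : δ ≤ 1 := min_le_left _ _
  have hδε : a * δ * 2 ^ (q - 1) ≤ ε := by
    have : δ * (a * 2 ^ (q - 1)) ≤ ε := (le_div_iff₀ (by positivity)).mp (min_le_right _ _)
    linarith
  refine ⟨a * (1 + δ⁻¹) ^ (q - 1), by positivity, fun s t => ?_⟩
  have hmvt :=
    abs_sub_le_of_abs_deriv_le (hF.differentiable one_ne_zero) ha.le (by linarith) hF' s t
  have hε_term : 0 ≤ ε * (|s| ^ (2:ℝ) + |s| ^ q) := by positivity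
  have hC_term : 0 ≤ a * (1 + δ⁻¹) ^ (q - 1) * (|t| ^ (2:ℝ) + |t| ^ q) := by positivity
  rcases le_total |t| (δ * |s|) with ht | ht
  · calc |F (s + t) - F s| ≤ a * δ * 2 ^ (q - 1) * (|s| ^ (2:ℝ) + |s| ^ q) :=
          hmvt.trans (increment_bound_le_of_abs_le hq.le ha.le hδ1 ht)
      _ ≤ ε * (|s| ^ (2:ℝ) + |s| ^ q) := by gcongr
      _ ≤ _ := le_add_of_nonneg_right hC_term
  · exact hmvt.trans ((increment_bound_le_of_le_abs hq.le ha.le hδ0 ht).trans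
      (le_add_of_nonneg_left hε_term))

theorem stmt_11 (a q : ℝ) (ha : 0 < a) (hq : 2 < q)
    (F : ℝ → ℝ) (hF : ContDiff ℝ 1 F) (hF0 : F 0 = 0)
    (hF' : ∀ t : ℝ, |deriv F t| ≤ a * (|t| + |t| ^ (q - 1))) :
    ∀ ε : ℝ, 0 < ε → ∃ C : ℝ, 0 < C ∧
      ∀ s t : ℝ, |F (s + t) - F s| ≤
        ε * (|s| ^ (2:ℝ) + |s| ^ q) + C * (|t| ^ (2:ℝ) + |t| ^ q) :=
  stmt_11_general a q ha hq F hF hF'
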